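/- Let r > 0 and n ∈ ℕ with n ≥ 1. Then (n/(2π)) · ∫_{−π/n}^{π/n} ((r cos θ − r)² + (r sin θ)²) dθ = 2r²(1 − (n/π)·sin(π/n)). -/

import Mathlib

open MeasureTheory Real

lemma sq_dist_circle_point (r θ : ℝ) :
    (r * cos θ - r) ^ 2 + (r * sin θ) ^ 2 = 2 * r ^ 2 * (1 - cos θ) := by
  linear_combination r ^ 2 * sin_sq_add_cos_sq θ

lemma integral_one_sub_cos_symm (a : ℝ) :
    ∫ θ in (-a)..a, (1 - cos θ) = 2 * (a - sin a) := by
  rw [intervalIntegral.integral_sub intervalIntegrable_const intervalIntegral.intervalIntegrable_cos,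
    intervalIntegral.integral_const, integral_cos, sin_neg]
  simp only [smul_eq_mul, mul_one]
  ring

theorem stmt19 (r : ℝ) (n : ℕ) (hn : 1 ≤ n) :
    (n : ℝ) / (2 * Real.pi) *
        ∫ θ in (-(Real.pi / n))..(Real.pi / n),
          ((r * Real.cos θ - r) ^ 2 + (r * Real.sin θ) ^ 2)
      = 2 * r ^ 2 * (1 - (n : ℝ) / Real.pi * Real.sin (Real.pi / n)) := by
  have hn0 : (n : ℝ) ≠ 0 := by positivity
  simp_rw [sq_dist_circle_point]
  rw [intervalIntegral.integral_const_mul, integral_one_sub_cos_symm]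
  field_simp
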